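/- arXiv:1802.00413 — 3 statements merged into one kernel-verified Lean document; each statement's English description precedes it below -/
import Mathlib

section
/- Let N, L be natural numbers with L even. Then the minimum of 2a + b + 4c + 3d over all natural numbers a, b, c, d satisfying a + b + 2c + d = N and a + 2b + c ≤ L equals max{N, ⌈(7N − 2L)/3⌉, 3N − 2L}, where the last two entries are understood as 0 when 2L ≥ 7N and 2L ≥ 3N respectively (equivalently, the minimum equals max(N, ⌈(7N ∸ 2L)/3⌉, 3N ∸ 2L) with truncated subtraction). -/
/-- Minimum total computation load of a three-node MapReduce system with
even total communication load constraint `L`: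
the minimum of `2a + b + 4c + 3d` over `a + b + 2c + d = N`, `a + 2b + c ≤ L`
equals `max (N, ⌈(7N ∸ 2L)/3⌉, 3N ∸ 2L)` (truncated subtraction). -/
theorem stmt_2 (N L : ℕ) (hL : 2 ∣ L) :
    IsLeast {T : ℕ | ∃ a b c d : ℕ,
        a + b + 2 * c + d = N ∧ a + 2 * b + c ≤ L ∧ T = 2 * a + b + 4 * c + 3 * d}
      (max N (max ((7 * N - 2 * L + 2) / 3) (3 * N - 2 * L))) := by
  constructor
  · rcases le_or_gt (4 * N) (2 * L) with h1 | h1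
    · exact ⟨0, N, 0, 0, by omega, by omega, by omega⟩
    · rcases lt_or_ge (2 * L) N with h2 | h2
      · exact ⟨0, 0, L, N - 2 * L, by omega, by omega, by omega⟩
      · refine ⟨((2 * L - N) % 3) % 2, (2 * L - N) / 3,
          (N - ((2 * L - N) % 3) % 2 - (2 * L - N) / 3) / 2, 0, by omega, by omega, by omega⟩
  · rintro T ⟨a, b, c, d, h1, h2, rfl⟩
    omega
end

section
/- Let N, L₁, L₂ be natural numbers. The minimum over natural numbers s₁, s₂, s₁₂ with s₁ + s₂ + s₁₂ = N, s₁ ≤ L₁, s₂ ≤ L₂ of max(s₁ + s₁₂, s₂ + s₁₂) equals N − min(L₁, L₂, N − ⌈N/2⌉). -/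
/-- Minimum worst-case computation load for a two-node MapReduce system:
the minimum of `max (s₁ + s₁₂) (s₂ + s₁₂)` over `s₁ + s₂ + s₁₂ = N`,
`s₁ ≤ L₁`, `s₂ ≤ L₂` equals `N - min (L₁, L₂, N - ⌈N/2⌉)`. -/
theorem stmt_7 (N L₁ L₂ : ℕ) :
    IsLeast {M : ℕ | ∃ s₁ s₂ s₁₂ : ℕ,
        s₁ + s₂ + s₁₂ = N ∧ s₁ ≤ L₁ ∧ s₂ ≤ L₂ ∧ M = max (s₁ + s₁₂) (s₂ + s₁₂)}
      (N - min L₁ (min L₂ (N - (N + 1) / 2))) := by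
  constructor
  · refine ⟨min L₁ (min L₂ (N - (N + 1) / 2)),
      min L₁ (min L₂ (N - (N + 1) / 2)),
      N - 2 * min L₁ (min L₂ (N - (N + 1) / 2)), by omega, by omega, by omega, by omega⟩
  · rintro M ⟨s₁, s₂, s₁₂, h, h1, h2, rfl⟩
    omega
end

section
/- Let N, L₁, L₂, L₃ be natural numbers with L₁ ≤ L₂ ≤ L₃, 2 ≤ L₁ ≤ 2N/3, and such that c := ⌈N/2 − L₁/4⌉ satisfies 5c ≥ 3N − L₁ − L₂ and 2c ≤ L₃. Then with S₁ = S₂ = N − 2c, S₃ = c, r₁ = L₁ − 2N + 4c, r₂ = N − L₁ − c, all five of S₁, S₂, S₃, r₁, r₂ are nonnegative integers; they satisfy S₁ + S₂ + S₃ + r₁ + r₂ = N; the communication constraints 2S₁ + r₁ ≤ L₁, 2S₂ + r₂ ≤ L₂, 2S₃ ≤ L₃ hold; and the three computation loads M₁ = S₁ + r₁ + r₂, M₂ = S₂ + r₁ + r₂, M₃ = S₃ all equal c, so max(M₁, M₂, M₃) = ⌈N/2 − L₁/4⌉. -/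
/-- Achievability verification for Condition 3 in Proposition 3, with
`c = ⌈N/2 − L₁/4⌉ = ⌈(2N − L₁)/4⌉`, worked in `ℤ` to express the
possibly-negative intermediate quantities. -/
theorem stmt_11 (N L₁ L₂ L₃ : ℕ)
    (h12 : L₁ ≤ L₂) (h23 : L₂ ≤ L₃)
    (hL1lo : 2 ≤ L₁) (hL1hi : 3 * L₁ ≤ 2 * N)
    (c : ℤ) (hc : c = ⌈(N : ℚ) / 2 - (L₁ : ℚ) / 4⌉)
    (h5c : 5 * c ≥ 3 * (N : ℤ) - L₁ - L₂)
    (h2c : 2 * c ≤ (L₃ : ℤ)) :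
    0 ≤ (N : ℤ) - 2 * c ∧
    0 ≤ (L₁ : ℤ) - 2 * N + 4 * c ∧
    0 ≤ (N : ℤ) - L₁ - c ∧
    ((N : ℤ) - 2 * c) + ((N : ℤ) - 2 * c) + c
        + ((L₁ : ℤ) - 2 * N + 4 * c) + ((N : ℤ) - L₁ - c) = N ∧
    2 * ((N : ℤ) - 2 * c) + ((L₁ : ℤ) - 2 * N + 4 * c) ≤ L₁ ∧
    2 * ((N : ℤ) - 2 * c) + ((N : ℤ) - L₁ - c) ≤ L₂ ∧
    2 * c ≤ (L₃ : ℤ) ∧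
    ((N : ℤ) - 2 * c) + ((L₁ : ℤ) - 2 * N + 4 * c) + ((N : ℤ) - L₁ - c) = c ∧
    max (max (((N : ℤ) - 2 * c) + ((L₁ : ℤ) - 2 * N + 4 * c) + ((N : ℤ) - L₁ - c))
             (((N : ℤ) - 2 * c) + ((L₁ : ℤ) - 2 * N + 4 * c) + ((N : ℤ) - L₁ - c)))
        c = ⌈(N : ℚ) / 2 - (L₁ : ℚ) / 4⌉ := by
  have hlow : (2 * N - L₁ : ℤ) ≤ 4 * c := by
    have h := Int.le_ceil ((N : ℚ) / 2 - (L₁ : ℚ) / 4)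
    rw [← hc] at h
    have : ((2 * N - L₁ : ℤ) : ℚ) ≤ ((4 * c : ℤ) : ℚ) := by push_cast; linarith
    exact_mod_cast this
  have hup : 4 * c ≤ (2 * N - L₁ : ℤ) + 3 := by
    have h := Int.ceil_lt_add_one ((N : ℚ) / 2 - (L₁ : ℚ) / 4)
    rw [← hc] at h
    have : ((4 * c : ℤ) : ℚ) < ((2 * N - L₁ : ℤ) : ℚ) + 4 := by push_cast; linarith
    have h2 : (4 * c : ℤ) < (2 * N - L₁ : ℤ) + 4 := by exact_mod_cast this
    omega
  have hcle : c ≤ (N : ℤ) - L₁ := by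
    rw [hc]
    apply Int.ceil_le.mpr
    have : (3 * L₁ : ℚ) ≤ 2 * N := by exact_mod_cast hL1hi
    push_cast
    linarith
  refine ⟨by omega, by omega, by omega, by ring, by omega, by omega, h2c, by ring, ?_⟩
  have key : ((N : ℤ) - 2 * c) + ((L₁ : ℤ) - 2 * N + 4 * c) + ((N : ℤ) - L₁ - c) = c := by
    ring
  rw [key, max_self, max_self, hc]
end
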